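/- arXiv:2110.00036 — 8 statements merged into one kernel-verified Lean document; each statement's English description precedes it below -/
import Mathlib

section
/- Let t_0 be the unique positive root of t^5 - 6t^3 + 3t^2 + 10t - 7 = 0. Then the quantity w = (t_0^2 + t_0) / (2 * sqrt(t_0^3 + t_0^2 - 2t_0 + 1)) satisfies 0.953776 < w < 0.953777. -/
theorem width_value_from_root (t₀ : ℝ) (ht : 0 < t₀)
    (hroot : t₀^5 - 6*t₀^3 + 3*t₀^2 + 10*t₀ - 7 = 0) :
    0.953776 < (t₀^2 + t₀) / (2 * Real.sqrt (t₀^3 + t₀^2 - 2*t₀ + 1)) ∧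
    (t₀^2 + t₀) / (2 * Real.sqrt (t₀^3 + t₀^2 - 2*t₀ + 1)) < 0.953777 := by
  have ha : (0.7682191 : ℝ) < t₀ := by
    by_contra h
    push_neg at h
    nlinarith [sq_nonneg t₀, sq_nonneg (t₀ - 0.7682191), sq_nonneg (t₀^2 - 1), mul_pos ht ht, sq_nonneg (t₀^2 - t₀), mul_pos (mul_pos ht ht) ht]
  have hb : t₀ < (0.7682192 : ℝ) := by
    by_contra h
    push_neg at h
    have h' : (0:ℝ) ≤ t₀ - 0.7682192 := by linarith
    nlinarith [mul_nonneg h' (sq_nonneg (t₀^2 + 0.3*t₀ - 2.5)),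
      mul_nonneg (mul_nonneg h' ht.le) (sq_nonneg (t₀ - 1.44)), h', ht.le]
  have hs : (0 : ℝ) < t₀^3 + t₀^2 - 2*t₀ + 1 := by nlinarith
  set r := Real.sqrt (t₀^3 + t₀^2 - 2*t₀ + 1) with hrdef
  have hr2 : r^2 = t₀^3 + t₀^2 - 2*t₀ + 1 := Real.sq_sqrt hs.le
  have hrpos : 0 < r := Real.sqrt_pos.2 hs
  have hrlo : (0.712106 : ℝ) < r := by nlinarith
  have hrhi : r < (0.7121062 : ℝ) := by nlinarith
  constructor
  · rw [lt_div_iff₀ (by positivity)]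
    nlinarith [sq_nonneg (r - 0.712068), sq_nonneg (t₀ - 0.7682191)]
  · rw [div_lt_iff₀ (by positivity)]
    nlinarith [sq_nonneg (r - 0.712068), sq_nonneg (t₀ - 0.7682192)]
end

section
/- The system of equations (i) 1 + d^2 - 2d·cos(α) = 2 - 2·cos(β), (ii) 3α + β = π/2, (iii) d = (2·sin(α) + 1)/(2·sin(2α + β)), in the unknowns α ∈ (0, π/6), β ∈ (0, π/8), d ∈ (0,1], has a solution with α ∈ (0.394243, 0.394244), β ∈ (0.388066, 0.388067), and d ∈ (0.957566, 0.957567). -/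
/-!
Equation (ii) forces `β = π/2 - 3α`, so `2α + β = π/2 - α` and (iii) reads
`d = (2 sin α + 1) / (2 cos α)`, while `cos β = sin 3α = 3s - 4s³` with `s = sin α`.
Substituting into (i) and clearing the denominator `4 cos² α = 4 (1 - s²)` turns (i) into the
quintic `32s⁵ - 48s³ + 12s² + 20s - 7 = 0`. The intermediate value theorem gives a root `s` in a
rational interval of width `2·10⁻⁸`; then `α = arcsin s` is located by the alternating Taylor
bounds of `sin`, and the bounds on `β` and `d` follow.
-/

open Real Finset Filter Nat

namespace Real

lemma antitone_sin_series_term {x : ℝ} (hx0 : 0 ≤ x) (hx1 : x ≤ 1) :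
    Antitone fun n : ℕ => x ^ (2 * n + 1) / ((2 * n + 1)! : ℝ) :=
  antitone_nat_of_succ_le fun _ =>
    div_le_div₀ (by positivity) (pow_le_pow_of_le_one hx0 hx1 (by omega)) (by positivity)
      (mod_cast Nat.factorial_le (by omega))

lemma tendsto_sin_series_partial_sum (x : ℝ) :
    Tendsto (fun n => ∑ i ∈ range n, (-1) ^ i * (x ^ (2 * i + 1) / ((2 * i + 1)! : ℝ)))
      atTop (nhds (sin x)) := by
  simpa only [mul_div_assoc] using (hasSum_sin x).tendsto_sum_nat

lemma sin_le_sum_range_odd {x : ℝ} (hx0 : 0 ≤ x) (hx1 : x ≤ 1) (k : ℕ) :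
    sin x ≤ ∑ i ∈ range (2 * k + 1), (-1) ^ i * (x ^ (2 * i + 1) / ((2 * i + 1)! : ℝ)) :=
  (antitone_sin_series_term hx0 hx1).tendsto_le_alternating_series
    (tendsto_sin_series_partial_sum x) k

lemma sum_range_even_le_sin {x : ℝ} (hx0 : 0 ≤ x) (hx1 : x ≤ 1) (k : ℕ) :
    ∑ i ∈ range (2 * k), (-1) ^ i * (x ^ (2 * i + 1) / ((2 * i + 1)! : ℝ)) ≤ sin x :=
  (antitone_sin_series_term hx0 hx1).alternating_series_le_tendsto
    (tendsto_sin_series_partial_sum x) k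

end Real

def octagonQuintic (s : ℝ) : ℝ := 32 * s ^ 5 - 48 * s ^ 3 + 12 * s ^ 2 + 20 * s - 7

lemma sub_eq_octagonQuintic_div {s c : ℝ} (hc : c ≠ 0) (hsc : s ^ 2 + c ^ 2 = 1) :
    (1 + ((2 * s + 1) / (2 * c)) ^ 2 - 2 * ((2 * s + 1) / (2 * c)) * c) -
      (2 - 2 * (3 * s - 4 * s ^ 3)) = octagonQuintic s / (4 * c ^ 2) := by
  unfold octagonQuintic
  field_simp
  linear_combination (-32 + 64 * s - 128 * s ^ 3) * hsc

lemma exists_octagonQuintic_root :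
    ∃ s ∈ Set.Ioo (0.38410957 : ℝ) 0.38410959, octagonQuintic s = 0 :=
  intermediate_value_Ioo (by norm_num) (by unfold octagonQuintic; fun_prop)
    (by norm_num [octagonQuintic])

lemma arcsin_mem_Ioo_of_mem_Ioo {s : ℝ} (hs : s ∈ Set.Ioo (0.38410957 : ℝ) 0.38410959) :
    arcsin s ∈ Set.Ioo (0.3942432 : ℝ) 0.3942433 := by
  have hpi := pi_gt_three
  have hsin_lo : sin 0.3942432 < s :=
    ((sin_le_sum_range_odd (by norm_num) (by norm_num) 2).trans_lt
      (by norm_num [sum_range_succ, Nat.factorial])).trans hs.1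
  have hsin_hi : s < sin 0.3942433 :=
    hs.2.trans_le <| le_trans (by norm_num [sum_range_succ, Nat.factorial])
      (sum_range_even_le_sin (by norm_num) (by norm_num) 2)
  constructor
  · rw [lt_arcsin_iff_sin_lt' ⟨by linarith, by linarith⟩]
    exact hsin_lo
  · rw [arcsin_lt_iff_lt_sin' ⟨by linarith, by linarith⟩]
    exact hsin_hi

lemma div_sqrt_mem_Ioo_of_mem_Ioo {s : ℝ} (hs : s ∈ Set.Ioo (0.38410957 : ℝ) 0.38410959) :
    (2 * s + 1) / (2 * √(1 - s ^ 2)) ∈ Set.Ioo (0.957566 : ℝ) 0.957567 := by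
  obtain ⟨hs_lo, hs_hi⟩ := hs
  have hc2 : √(1 - s ^ 2) ^ 2 = 1 - s ^ 2 := sq_sqrt (by nlinarith)
  have hc : 0 < √(1 - s ^ 2) := sqrt_pos.2 (by nlinarith)
  constructor
  · rw [lt_div_iff₀ (by positivity)]
    nlinarith
  · rw [div_lt_iff₀ (by positivity)]
    nlinarith

theorem F8_system_has_solution :
    ∃ α β d : ℝ,
      (0 < α ∧ α < π/6) ∧ (0 < β ∧ β < π/8) ∧ (0 < d ∧ d ≤ 1) ∧
      1 + d^2 - 2*d*cos α = 2 - 2*cos β ∧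
      3*α + β = π/2 ∧
      d = (2*sin α + 1) / (2*sin (2*α + β)) ∧
      (0.394243 < α ∧ α < 0.394244) ∧
      (0.388066 < β ∧ β < 0.388067) ∧
      (0.957566 < d ∧ d < 0.957567) := by
  obtain ⟨s, hs, hroot⟩ := exists_octagonQuintic_root
  obtain ⟨hα_lo, hα_hi⟩ := arcsin_mem_Ioo_of_mem_Ioo hs
  obtain ⟨hd_lo, hd_hi⟩ := div_sqrt_mem_Ioo_of_mem_Ioo hs
  set α := arcsin s
  have hsin : sin α = s := sin_arcsin (by linarith [hs.1]) (by linarith [hs.2])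
  have hcos : cos α = √(1 - s ^ 2) := cos_arcsin s
  rw [← hcos, ← hsin] at hd_lo hd_hi
  have hcos_pos : 0 < cos α := by rw [hcos]; exact sqrt_pos.2 (by nlinarith [hs.1, hs.2])
  have hpi_lo := pi_gt_d6
  have hpi_hi := pi_lt_d6
  refine ⟨α, π/2 - 3*α, (2*sin α + 1) / (2*cos α), ⟨by linarith, by linarith⟩,
    ⟨by linarith, by linarith⟩, ⟨by linarith, by linarith⟩, ?_, by ring, ?_,
    ⟨by linarith, by linarith⟩, ⟨by linarith, by linarith⟩, hd_lo, hd_hi⟩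
  · rw [cos_pi_div_two_sub, sin_three_mul, ← sub_eq_zero,
      sub_eq_octagonQuintic_div hcos_pos.ne' (sin_sq_add_cos_sq α), hsin, hroot, zero_div]
  · rw [show 2*α + (π/2 - 3*α) = π/2 - α by ring, sin_pi_div_two_sub]
end

section
/- Suppose α, β, d satisfy 1 + d^2 - 2d·cos(α) = 2 - 2·cos(β), 3α + β = π/2, and d = (2·sin(α) + 1)/(2·sin(2α + β)), with α ∈ (0, π/6), β ∈ (0, π/8), d ∈ (0,1]. Then t = 2·sin(α) is a root of the polynomial t^5 - 6t^3 + 3t^2 + 10t - 7. -/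
open Real

theorem F8_system_gives_quintic_root (α β d : ℝ)
    (hα : 0 < α ∧ α < π/6) (hβ : 0 < β ∧ β < π/8) (hd : 0 < d ∧ d ≤ 1)
    (h1 : 1 + d^2 - 2*d*cos α = 2 - 2*cos β)
    (h2 : 3*α + β = π/2)
    (h3 : d = (2*sin α + 1) / (2*sin (2*α + β))) :
    (2*sin α)^5 - 6*(2*sin α)^3 + 3*(2*sin α)^2 + 10*(2*sin α) - 7 = 0 := by
  have hpi := Real.pi_pos
  have hc : 0 < cos α := Real.cos_pos_of_mem_Ioo ⟨by linarith [hα.1], by linarith [hα.2]⟩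
  have hβe : β = π/2 - 3*α := by linarith
  have hcb : cos β = sin (3*α) := by rw [hβe, Real.cos_pi_div_two_sub]
  have hsab : sin (2*α + β) = cos α := by
    rw [hβe, show 2*α + (π/2 - 3*α) = π/2 - α by ring, Real.sin_pi_div_two_sub]
  have hc2 : cos α ^ 2 = 1 - sin α ^ 2 := Real.cos_sq' α
  rw [hsab] at h3
  rw [hcb, Real.sin_three_mul, h3] at h1
  have hcne : cos α ≠ 0 := ne_of_gt hc
  field_simp at h1
  have h2c : (2*cos α) ≠ 0 := by positivity
  have h1' : (4*cos α^2 + (2*sin α+1)^2) - 4*cos α^2*(2*sin α+1)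
      = (2 - 6*sin α + 8*sin α^3)*(4*cos α^2) := by
    apply mul_right_cancel₀ h2c
    linear_combination (2*cos α) * h1
  linear_combination h1' - (4*(4*sin α - 2 - 8*sin α^3)) * hc2
end

section
/- The octagon with vertices v0=(0,0), v1=(x1,y1), v2=(1/2,y2), v3=(x3,y3), v4=(0,d), v5=(-x3,y3), v6=(-1/2,y2), v7=(-x1,y1), where x1 ≈ 0.3208100713, y1 ≈ 0.2140003477, y2 ≈ 0.5554768772, x3 ≈ 0.3841095838, y3 ≈ 0.9232875108, d ≈ 0.9575669263 (the solution of the F_8 system), is equilateral: all eight sides have equal length. -/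
open Real

noncomputable def dist2 (p q : ℝ × ℝ) : ℝ :=
  Real.sqrt ((p.1 - q.1)^2 + (p.2 - q.2)^2)

/-- The octagon `F₈` determined by a solution `(α, β, d)` of the system is equilateral:
all eight sides have the same length. The vertex coordinates are the exact ones
approximated by x1 ≈ 0.3208100713, y1 ≈ 0.2140003477, y2 ≈ 0.5554768772,
x3 ≈ 0.3841095838, y3 ≈ 0.9232875108, d ≈ 0.9575669263. -/
theorem F8_equilateral (α β d : ℝ)
    (hα : 0.394243 < α ∧ α < 0.394244)
    (hβ : 0.388066 < β ∧ β < 0.388067)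
    (hd : 0.957566 < d ∧ d < 0.957567)
    (h1 : 1 + d^2 - 2*d*cos α = 2 - 2*cos β)
    (h2 : 3*α + β = π/2)
    (h3 : d = (2*sin α + 1) / (2*sin (2*α + β))) :
    let x1 : ℝ := sin (α + β) - sin α
    let y1 : ℝ := cos α - cos (α + β)
    let x2 : ℝ := (1 : ℝ)/2
    let y2 : ℝ := cos α - d * cos (2*α + β)
    let x3 : ℝ := sin α
    let y3 : ℝ := cos α
    let v0 : ℝ × ℝ := (0, 0)
    let v1 : ℝ × ℝ := (x1, y1)
    let v2 : ℝ × ℝ := (x2, y2)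
    let v3 : ℝ × ℝ := (x3, y3)
    let v4 : ℝ × ℝ := (0, d)
    let v5 : ℝ × ℝ := (-x3, y3)
    let v6 : ℝ × ℝ := (-x2, y2)
    let v7 : ℝ × ℝ := (-x1, y1)
    dist2 v0 v1 = dist2 v1 v2 ∧ dist2 v1 v2 = dist2 v2 v3 ∧
    dist2 v2 v3 = dist2 v3 v4 ∧ dist2 v3 v4 = dist2 v4 v5 ∧
    dist2 v4 v5 = dist2 v5 v6 ∧ dist2 v5 v6 = dist2 v6 v7 ∧
    dist2 v6 v7 = dist2 v7 v0 := by
  intro x1 y1 x2 y2 x3 y3 v0 v1 v2 v3 v4 v5 v6 v7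
  have hpi : (3.141592 : ℝ) < π := Real.pi_gt_d6
  have hcpos : 0 < cos α := by
    apply Real.cos_pos_of_mem_Ioo
    constructor <;> [linarith [hα.1]; linarith [hα.2]]
  have e2 : 2*α+β = π/2 - α := by linarith
  have e1 : α+β = π/2 - 2*α := by linarith
  have e0 : β = π/2 - 3*α := by linarith
  have hsab : sin (α+β) = 2*cos α^2 - 1 := by
    rw [e1, Real.sin_pi_div_two_sub, Real.cos_two_mul]
  have hcab : cos (α+β) = 2*sin α*cos α := by
    rw [e1, Real.cos_pi_div_two_sub, Real.sin_two_mul]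
  have hc2 : cos (2*α+β) = sin α := by rw [e2, Real.cos_pi_div_two_sub]
  have hcb : cos β = 3*sin α - 4*sin α^3 := by
    rw [e0, Real.cos_pi_div_two_sub, Real.sin_three_mul]
  have hQ : 2*d*cos α = 2*sin α + 1 := by
    rw [e2, Real.sin_pi_div_two_sub] at h3
    field_simp at h3
    linarith
  have hP : sin α^2 + cos α^2 = 1 := Real.sin_sq_add_cos_sq α
  have hH : 1 + d^2 - 2*d*cos α = 2 - 2*(3*sin α - 4*sin α^3) := by
    rw [← hcb]; exact h1
  simp only [x1, y1, x2, y2, x3, y3, v0, v1, v2, v3, v4, v5, v6, v7, dist2,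
    hsab, hcab, hc2, hcb]
  set s := sin α with hs
  set c := cos α with hc
  refine ⟨?_, ?_, ?_, ?_, ?_, ?_, ?_⟩ <;> congr 1
  · linear_combination (3 - 4*s - d^2)*hP + (2*s^2 + s/2 - 3/4 + d*c/2)*hQ + (-1)*hH
  · linear_combination (-2 + 4*c^2 - 4*s)*hP + (-2*s^2)*hQ
  · linear_combination (-1 + d^2)*hP + (3/4 - s/2 - d*c/2)*hQ
  · ring
  · linear_combination (1 - d^2)*hP + (-3/4 + s/2 + d*c/2)*hQ
  · linear_combination (2 - 4*c^2 + 4*s)*hP + (2*s^2)*hQ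
  · linear_combination (-3 + 4*s + d^2)*hP + (-2*s^2 - s/2 + 3/4 - d*c/2)*hQ + hH
end

section
/- For α ≈ 0.3942432313, β ≈ 0.3880666326, d ≈ 0.9575669263 solving the system 1 + d^2 − 2d cos α = 2 − 2 cos β, 3α + β = π/2, d = (2 sin α + 1)/(2 sin(2α + β)), the width value W = d·sin(α)/(2·sin(β/2)) satisfies 0.9537 < W < 0.9538, and exceeds both cos(π/8) ≈ 0.9238795 and 0.9503943246 (the width of the maximal-perimeter equilateral octagon H_8). -/
open Real

private lemma pos_of_deriv_pos' {f f' : ℝ → ℝ} (hf : ∀ y, HasDerivAt f (f' y) y)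
    (h0 : f 0 = 0) (hpos : ∀ y, 0 < y → 0 < f' y) {x : ℝ} (hx : 0 < x) : 0 < f x := by
  have hmono : StrictMonoOn f (Set.Ici 0) := by
    apply strictMonoOn_of_deriv_pos (convex_Ici 0)
    · exact fun y _ => (hf y).continuousAt.continuousWithinAt
    · intro y hy
      rw [interior_Ici, Set.mem_Ioi] at hy
      rw [(hf y).deriv]
      exact hpos y hy
  have := hmono Set.self_mem_Ici (Set.mem_Ici.mpr hx.le) hx
  rwa [h0] at this

private lemma sin_gt_t3 {x : ℝ} (hx : 0 < x) : x - x^3/6 < sin x := by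
  have h := pos_of_deriv_pos' (f := fun y => sin y - (y - y^3/6))
      (f' := fun y => cos y - (1 - y^2/2)) ?_ (by norm_num) ?_ hx
  · simpa using h
  · intro y
    have h2 : HasDerivAt (fun y : ℝ => y - y^3/6) (1 - 3*y^2/6) y := by
      simpa using (hasDerivAt_id y).fun_sub ((hasDerivAt_pow 3 y).div_const 6)
    have := (Real.hasDerivAt_sin y).fun_sub h2
    refine this.congr_deriv ?_
    ring
  · intro y hy
    have := Real.one_sub_sq_div_two_lt_cos (x := y) (ne_of_gt hy)
    linarith

private lemma cos_lt_t4 {x : ℝ} (hx : 0 < x) : cos x < 1 - x^2/2 + x^4/24 := by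
  have h := pos_of_deriv_pos' (f := fun y => 1 - y^2/2 + y^4/24 - cos y)
      (f' := fun y => sin y - (y - y^3/6)) ?_ (by norm_num) ?_ hx
  · simpa using h
  · intro y
    have h2 : HasDerivAt (fun y : ℝ => 1 - y^2/2 + y^4/24) (-(2*y/2) + 4*y^3/24) y := by
      simpa using (((hasDerivAt_const y (1:ℝ)).fun_sub ((hasDerivAt_pow 2 y).div_const 2)).fun_add
        ((hasDerivAt_pow 4 y).div_const 24))
    have := h2.fun_sub (Real.hasDerivAt_cos y)
    refine this.congr_deriv ?_
    ring
  · intro y hy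
    have := sin_gt_t3 hy
    linarith

private lemma sin_lt_t5 {x : ℝ} (hx : 0 < x) : sin x < x - x^3/6 + x^5/120 := by
  have h := pos_of_deriv_pos' (f := fun y => y - y^3/6 + y^5/120 - sin y)
      (f' := fun y => 1 - y^2/2 + y^4/24 - cos y) ?_ (by norm_num) ?_ hx
  · simpa using h
  · intro y
    have h2 : HasDerivAt (fun y : ℝ => y - y^3/6 + y^5/120) (1 - 3*y^2/6 + 5*y^4/120) y := by
      simpa using ((hasDerivAt_id y).fun_sub ((hasDerivAt_pow 3 y).div_const 6)).fun_add
        ((hasDerivAt_pow 5 y).div_const 120)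
    have := h2.fun_sub (Real.hasDerivAt_sin y)
    refine this.congr_deriv ?_
    ring
  · intro y hy
    have := cos_lt_t4 hy
    linarith

private lemma cos_gt_t6 {x : ℝ} (hx : 0 < x) : 1 - x^2/2 + x^4/24 - x^6/720 < cos x := by
  have h := pos_of_deriv_pos' (f := fun y => cos y - (1 - y^2/2 + y^4/24 - y^6/720))
      (f' := fun y => y - y^3/6 + y^5/120 - sin y) ?_ (by norm_num) ?_ hx
  · simpa using h
  · intro y
    have h2 : HasDerivAt (fun y : ℝ => 1 - y^2/2 + y^4/24 - y^6/720)
        (-(2*y/2) + 4*y^3/24 - 6*y^5/720) y := by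
      simpa using (((hasDerivAt_const y (1:ℝ)).fun_sub ((hasDerivAt_pow 2 y).div_const 2)).fun_add
        ((hasDerivAt_pow 4 y).div_const 24)).fun_sub ((hasDerivAt_pow 6 y).div_const 720)
    have := (Real.hasDerivAt_cos y).fun_sub h2
    refine this.congr_deriv ?_
    ring
  · intro y hy
    have := sin_lt_t5 hy
    linarith

private lemma sin_gt_t7 {x : ℝ} (hx : 0 < x) :
    x - x^3/6 + x^5/120 - x^7/5040 < sin x := by
  have h := pos_of_deriv_pos' (f := fun y => sin y - (y - y^3/6 + y^5/120 - y^7/5040))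
      (f' := fun y => cos y - (1 - y^2/2 + y^4/24 - y^6/720)) ?_ (by norm_num) ?_ hx
  · simpa using h
  · intro y
    have h2 : HasDerivAt (fun y : ℝ => y - y^3/6 + y^5/120 - y^7/5040)
        (1 - 3*y^2/6 + 5*y^4/120 - 7*y^6/5040) y := by
      simpa using (((hasDerivAt_id y).fun_sub ((hasDerivAt_pow 3 y).div_const 6)).fun_add
        ((hasDerivAt_pow 5 y).div_const 120)).fun_sub ((hasDerivAt_pow 7 y).div_const 5040)
    have := (Real.hasDerivAt_sin y).fun_sub h2
    refine this.congr_deriv ?_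
    ring
  · intro y hy
    have := cos_gt_t6 hy
    linarith

set_option maxHeartbeats 1000000 in
theorem F8_width_value (α β d : ℝ)
    (hα : 0.394243 < α ∧ α < 0.394244)
    (hβ : 0.388066 < β ∧ β < 0.388067)
    (hd : 0.957566 < d ∧ d < 0.957567)
    (h1 : 1 + d^2 - 2*d*cos α = 2 - 2*cos β)
    (h2 : 3*α + β = π/2)
    (h3 : d = (2*sin α + 1) / (2*sin (2*α + β))) :
    0.9537 < d * sin α / (2 * sin (β/2)) ∧
    d * sin α / (2 * sin (β/2)) < 0.9538 ∧
    cos (π/8) < d * sin α / (2 * sin (β/2)) ∧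
    0.9503943246 < d * sin α / (2 * sin (β/2)) := by
  obtain ⟨ha1, ha2⟩ := hα
  obtain ⟨hb1, hb2⟩ := hβ
  obtain ⟨hd1, hd2⟩ := hd
  have hα0 : (0:ℝ) < α := by linarith
  have hb0 : (0:ℝ) < β/2 := by linarith
  have hb1' : (0.194033:ℝ) < β/2 := by linarith
  have hb2' : β/2 < (0.1940335:ℝ) := by linarith
  clear h1 h2 h3
  -- power bounds for α
  have ha3u : α^3 < (0.06127669:ℝ) := by
    calc α^3 < (0.394244:ℝ)^3 := pow_lt_pow_left₀ ha2 hα0.le (by norm_num)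
    _ < 0.06127669 := by norm_num
  have ha3l : (0.06127622:ℝ) < α^3 := by
    calc (0.06127622:ℝ) < (0.394243:ℝ)^3 := by norm_num
    _ < α^3 := pow_lt_pow_left₀ ha1 (by norm_num) (by norm_num)
  have ha5l : (0.00952401:ℝ) < α^5 := by
    calc (0.00952401:ℝ) < (0.394243:ℝ)^5 := by norm_num
    _ < α^5 := pow_lt_pow_left₀ ha1 (by norm_num) (by norm_num)
  have ha5u : α^5 < (0.00952414:ℝ) := by
    calc α^5 < (0.394244:ℝ)^5 := pow_lt_pow_left₀ ha2 hα0.le (by norm_num)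
    _ < 0.00952414 := by norm_num
  have ha7u : α^7 < (0.00148033:ℝ) := by
    calc α^7 < (0.394244:ℝ)^7 := pow_lt_pow_left₀ ha2 hα0.le (by norm_num)
    _ < 0.00148033 := by norm_num
  -- power bounds for t = β/2
  have ht3u : (β/2)^3 < (0.00730517:ℝ) := by
    calc (β/2)^3 < (0.1940335:ℝ)^3 := pow_lt_pow_left₀ hb2' hb0.le (by norm_num)
    _ < 0.00730517 := by norm_num
  have ht3l : (0.00730511:ℝ) < (β/2)^3 := by
    calc (0.00730511:ℝ) < (0.194033:ℝ)^3 := by norm_num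
    _ < (β/2)^3 := pow_lt_pow_left₀ hb1' (by norm_num) (by norm_num)
  have ht5l : (0.00027502:ℝ) < (β/2)^5 := by
    calc (0.00027502:ℝ) < (0.194033:ℝ)^5 := by norm_num
    _ < (β/2)^5 := pow_lt_pow_left₀ hb1' (by norm_num) (by norm_num)
  have ht5u : (β/2)^5 < (0.00027504:ℝ) := by
    calc (β/2)^5 < (0.1940335:ℝ)^5 := pow_lt_pow_left₀ hb2' hb0.le (by norm_num)
    _ < 0.00027504 := by norm_num
  have ht7u : (β/2)^7 < (0.0000104:ℝ) := by
    calc (β/2)^7 < (0.1940335:ℝ)^7 := pow_lt_pow_left₀ hb2' hb0.le (by norm_num)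
    _ < 0.0000104 := by norm_num
  -- sin bounds
  have sa1 := sin_gt_t7 hα0
  have sa2 := sin_lt_t5 hα0
  have st1 := sin_gt_t7 hb0
  have st2 := sin_lt_t5 hb0
  have hsl : (0.3841089:ℝ) < sin α := by linarith
  have hsu : sin α < (0.3841107:ℝ) := by linarith
  have htl : (0.1928177:ℝ) < sin (β/2) := by linarith
  have htu : sin (β/2) < (0.1928183:ℝ) := by linarith
  have htpos : (0:ℝ) < 2 * sin (β/2) := by linarith
  have key1 : (0.957566:ℝ) * 0.3841089 < d * sin α := by
    nlinarith [mul_pos (sub_pos.mpr hd1) (sub_pos.mpr hsl)]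
  have key2 : d * sin α < (0.957567:ℝ) * 0.3841107 := by
    nlinarith [mul_pos (sub_pos.mpr hd2) (sub_pos.mpr hsu)]
  have hW1 : (0.9537:ℝ) < d * sin α / (2 * sin (β/2)) := by
    rw [lt_div_iff₀ htpos]
    linarith
  have hW2 : d * sin α / (2 * sin (β/2)) < 0.9538 := by
    rw [div_lt_iff₀ htpos]
    linarith
  refine ⟨hW1, hW2, ?_, by linarith⟩
  have hc : cos (π/8) < 0.93 := by
    rw [Real.cos_pi_div_eight]
    have h2 : Real.sqrt 2 < 1.4596 := by
      rw [show (1.4596:ℝ) = Real.sqrt (1.4596^2) by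
        rw [Real.sqrt_sq]; norm_num]
      apply Real.sqrt_lt_sqrt (by norm_num)
      norm_num
    have h3 : Real.sqrt (2 + Real.sqrt 2) < 1.86 := by
      rw [show (1.86:ℝ) = Real.sqrt (1.86^2) by
        rw [Real.sqrt_sq]; norm_num]
      apply Real.sqrt_lt_sqrt (by positivity)
      nlinarith
    linarith
  linarith
end

section
/- For every integer n ≥ 3 and every convex polygon P with n vertices, W(P)/L(P) ≤ (1/(2n))·cot(π/(2n)), where W(P) is the width of P and L(P) its perimeter. -/
open Real

/-- The width of the polygon with vertices `v`. -/
noncomputable def polygonWidth {n : ℕ} [NeZero n] (v : Fin n → ℝ × ℝ) : ℝ :=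
  ⨅ θ : ℝ,
    ((Finset.univ.sup' Finset.univ_nonempty
        fun i => (v i).1 * Real.cos θ + (v i).2 * Real.sin θ) -
     (Finset.univ.inf' Finset.univ_nonempty
        fun i => (v i).1 * Real.cos θ + (v i).2 * Real.sin θ))

/-- The perimeter of the polygon with vertices `v`. -/
noncomputable def polygonPerimeter {n : ℕ} [NeZero n] (v : Fin n → ℝ × ℝ) : ℝ :=
  ∑ i : Fin n, Real.sqrt (((v (i+1)).1 - (v i).1)^2 + ((v (i+1)).2 - (v i).2)^2)

/-- The cross product determining the orientation of the triple `(a, b, c)`. -/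
def cross (a b c : ℝ × ℝ) : ℝ :=
  (b.1 - a.1) * (c.2 - a.2) - (b.2 - a.2) * (c.1 - a.1)

private lemma tele (q : ℕ → ℝ) (a b : ℕ) (h : a ≤ b) :
    |q b - q a| ≤ ∑ m ∈ Finset.Ico a b, |q (m+1) - q m| := by
  have h1 : q b - q a = ∑ m ∈ Finset.Ico a b, (q (m+1) - q m) := by
    have h2 := Finset.sum_Ico_consecutive (fun m => q (m+1) - q m) (Nat.zero_le a) h
    simp only [Nat.Ico_zero_eq_range] at h2
    rw [Finset.sum_range_sub q a, Finset.sum_range_sub q b] at h2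
    linarith
  rw [h1]
  exact Finset.abs_sum_le_sum_abs _ _

private lemma sign_lemma {F : ℝ → ℝ} (hF : Continuous F) {c d : ℝ} (hcd : c ≤ d)
    (h0 : ∀ θ ∈ Set.Ioo c d, F θ ≠ 0) :
    ∃ s : ℝ, (s = 1 ∨ s = -1) ∧ ∀ θ ∈ Set.Icc c d, |F θ| = s * F θ := by
  rcases eq_or_lt_of_le hcd with rfl | hlt
  · rcases le_or_gt 0 (F c) with h | h
    · refine ⟨1, Or.inl rfl, fun θ hθ => ?_⟩
      have : θ = c := le_antisymm hθ.2 hθ.1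
      subst this; rw [abs_of_nonneg h, one_mul]
    · refine ⟨-1, Or.inr rfl, fun θ hθ => ?_⟩
      have : θ = c := le_antisymm hθ.2 hθ.1
      subst this; rw [abs_of_neg h]; ring
  · set m := (c + d)/2 with hm
    have hmem : m ∈ Set.Ioo c d := ⟨by simp only [hm]; linarith, by simp only [hm]; linarith⟩
    set s : ℝ := if 0 ≤ F m then 1 else -1 with hs
    have hs1 : s = 1 ∨ s = -1 := by rw [hs]; split <;> simp
    have habs : |s| = 1 := by rcases hs1 with h | h <;> rw [h] <;> norm_num
    refine ⟨s, hs1, ?_⟩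
    have hIoo : ∀ θ ∈ Set.Ioo c d, 0 ≤ s * F θ := by
      intro θ hθ
      by_contra hneg
      push_neg at hneg
      have h0' : (0:ℝ) ∈ Set.uIcc (F θ) (F m) := by
        rw [Set.mem_uIcc]
        rw [hs] at hneg
        split at hneg
        · left; constructor
          · nlinarith
          · assumption
        · right
          push_neg at *
          constructor
          · linarith
          · nlinarith
      obtain ⟨x, hx, hx0⟩ := intermediate_value_uIcc (hF.continuousOn) h0'
      exact h0 x (Set.ordConnected_Ioo.uIcc_subset hθ hmem hx) hx0
    have hIcc : ∀ θ ∈ Set.Icc c d, 0 ≤ s * F θ := by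
      have heq : Set.EqOn (fun θ => |s * F θ|) (fun θ => s * F θ) (Set.Ioo c d) :=
        fun θ hθ => abs_of_nonneg (hIoo θ hθ)
      have h2 := heq.closure (continuous_abs.comp (continuous_const.mul hF))
        (continuous_const.mul hF)
      rw [closure_Ioo hlt.ne] at h2
      intro θ hθ
      have h3 := h2 hθ
      simp only at h3
      rw [← h3]
      exact abs_nonneg _
    intro θ hθ
    rw [← one_mul |F θ|, ← habs, ← abs_mul, abs_of_nonneg (hIcc θ hθ)]

private lemma lin_int (A B c d : ℝ) :
    ∫ θ in c..d, (A * Real.cos θ + B * Real.sin θ)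
      = A * (Real.sin d - Real.sin c) + B * (Real.cos c - Real.cos d) := by
  rw [intervalIntegral.integral_add (f := fun θ => A * Real.cos θ) (g := fun θ => B * Real.sin θ) ((continuous_const.mul Real.continuous_cos).intervalIntegrable _ _)
    ((continuous_const.mul Real.continuous_sin).intervalIntegrable _ _),
    intervalIntegral.integral_const_mul, intervalIntegral.integral_const_mul,
    integral_cos, integral_sin]

private lemma sin_int (A B c d : ℝ) (h : Real.cos ((d - c)/2) ≠ 0) :
    ∫ θ in c..d, (A * Real.cos θ + B * Real.sin θ) =
      Real.tan ((d - c)/2) *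
        ((A * Real.cos c + B * Real.sin c) + (A * Real.cos d + B * Real.sin d)) := by
  obtain ⟨S, u, rfl, rfl⟩ : ∃ S u, c = S - u ∧ d = S + u :=
    ⟨(c+d)/2, (d-c)/2, by ring, by ring⟩
  have hu : (S + u - (S - u))/2 = u := by ring
  rw [hu] at h ⊢
  rw [lin_int, Real.tan_eq_sin_div_cos, Real.sin_add, Real.sin_sub, Real.cos_add, Real.cos_sub]
  field_simp
  ring

private lemma tan_tl {y x : ℝ} (hy0 : 0 < y) (hy : y < π/2) (hx0 : 0 ≤ x) (hx : x < π/2) :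
    Real.tan y + (x - y) * (1 + Real.tan y ^ 2) ≤ Real.tan x := by
  have hcos : ∀ z : ℝ, 0 ≤ z → z < π/2 → Real.cos z ≠ 0 := fun z h1 h2 =>
    ne_of_gt (Real.cos_pos_of_mem_Ioo ⟨by linarith [Real.pi_pos], h2⟩)
  have hmono : ∀ z w : ℝ, 0 ≤ z → z ≤ w → w < π/2 → Real.tan z ≤ Real.tan w := by
    intro z w h1 h2 h3
    have hz : z ∈ Set.Ioo (-(π/2)) (π/2) := ⟨by linarith [Real.pi_pos], by linarith⟩
    have hw : w ∈ Set.Ioo (-(π/2)) (π/2) := ⟨by linarith [Real.pi_pos], h3⟩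
    exact Real.strictMonoOn_tan.monotoneOn hz hw h2
  have hinv : ∀ z : ℝ, 0 ≤ z → z < π/2 → 1 / Real.cos z ^ 2 = 1 + Real.tan z ^ 2 := by
    intro z h1 h2
    rw [← Real.inv_one_add_tan_sq (hcos z h1 h2)]
    field_simp
  rcases lt_trichotomy x y with h | h | h
  · -- x < y : MVT on [x, y]
    have hct : ContinuousOn Real.tan (Set.Icc x y) := by
      intro z hz
      exact (Real.continuousAt_tan.2 (hcos z (le_trans hx0 hz.1) (lt_of_le_of_lt hz.2 hy))).continuousWithinAt
    have hder : ∀ z ∈ Set.Ioo x y, HasDerivAt Real.tan (1 / Real.cos z ^ 2) z := fun z hz =>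
      Real.hasDerivAt_tan (hcos z (le_trans hx0 hz.1.le) (lt_trans hz.2 hy))
    obtain ⟨z, hz, hzeq⟩ := exists_hasDerivAt_eq_slope Real.tan _ h hct hder
    have h1 : 1 / Real.cos z ^ 2 ≤ 1 + Real.tan y ^ 2 := by
      rw [hinv z (le_trans hx0 hz.1.le) (lt_trans hz.2 hy)]
      have := hmono z y (le_trans hx0 hz.1.le) hz.2.le hy
      have h0 := Real.tan_nonneg_of_nonneg_of_le_pi_div_two (le_trans hx0 hz.1.le) (le_trans hz.2.le hy.le)
      nlinarith
    have h2 : Real.tan y - Real.tan x = (1 / Real.cos z ^ 2) * (y - x) := by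
      rw [hzeq, div_mul_cancel₀ _ (by linarith : y - x ≠ 0)]
    nlinarith [Real.cos_pos_of_mem_Ioo (show z ∈ Set.Ioo (-(π/2)) (π/2) from
      ⟨by linarith [Real.pi_pos, hz.1, hx0], by linarith [hz.2]⟩)]
  · subst h; simp
  · -- y < x
    have hct : ContinuousOn Real.tan (Set.Icc y x) := by
      intro z hz
      exact (Real.continuousAt_tan.2 (hcos z (le_trans hy0.le hz.1) (lt_of_le_of_lt hz.2 hx))).continuousWithinAt
    have hder : ∀ z ∈ Set.Ioo y x, HasDerivAt Real.tan (1 / Real.cos z ^ 2) z := fun z hz =>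
      Real.hasDerivAt_tan (hcos z (le_trans hy0.le hz.1.le) (lt_trans hz.2 hx))
    obtain ⟨z, hz, hzeq⟩ := exists_hasDerivAt_eq_slope Real.tan _ h hct hder
    have h1 : 1 + Real.tan y ^ 2 ≤ 1 / Real.cos z ^ 2 := by
      rw [hinv z (le_trans hy0.le hz.1.le) (lt_trans hz.2 hx)]
      have := hmono y z hy0.le hz.1.le (lt_trans hz.2 hx)
      have h0 := Real.tan_nonneg_of_nonneg_of_le_pi_div_two hy0.le hy.le
      nlinarith
    have h2 : Real.tan x - Real.tan y = (1 / Real.cos z ^ 2) * (x - y) := by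
      rw [hzeq, div_mul_cancel₀ _ (by linarith : x - y ≠ 0)]
    nlinarith

open Fin.NatCast in
private lemma cyc_tv {n : ℕ} [NeZero n] (p : Fin n → ℝ) (j k : Fin n) :
    2 * (p j - p k) ≤ ∑ i : Fin n, |p (i + 1) - p i| := by
  set q : ℕ → ℝ := fun m => p (k + (m : Fin n)) with hq
  have hsum : ∑ i : Fin n, |p (i+1) - p i| = ∑ m ∈ Finset.range n, |q (m+1) - q m| := by
    rw [← Fin.sum_univ_eq_sum_range (fun m => |q (m+1) - q m|)]
    refine (Fintype.sum_equiv (Equiv.addLeft k) _ _ fun x => ?_).symm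
    simp only [hq, Nat.cast_add, Nat.cast_one, Fin.cast_val_eq_self, Equiv.coe_addLeft]
    rw [add_assoc]
  have hq0 : q 0 = p k := by simp [hq]
  have hqn : q n = p k := by simp [hq]
  set m₀ : ℕ := (j - k).val with hm0
  have hm0n : m₀ ≤ n := (j - k).2.le
  have hqm : q m₀ = p j := by
    simp only [hq, hm0, Fin.cast_val_eq_self]
    congr 1
    exact add_sub_cancel k j
  have t1 := tele q 0 m₀ (Nat.zero_le _)
  have t2 := tele q m₀ n hm0n
  rw [hsum, ← Nat.Ico_zero_eq_range, ← Finset.sum_Ico_consecutive _ (Nat.zero_le m₀) hm0n]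
  rw [hq0, hqm] at t1
  rw [hqn, hqm] at t2
  have a1 := le_abs_self (p j - p k)
  have a2 := neg_abs_le (p k - p j)
  linarith

private lemma key {n : ℕ} [NeZero n] (hn : 3 ≤ n) (e : Fin n → ℝ × ℝ) {W : ℝ} (hW : 0 < W)
    (hg : ∀ θ : ℝ, 2 * W ≤ ∑ i : Fin n, |(e i).1 * Real.cos θ + (e i).2 * Real.sin θ|) :
    2 * n * Real.tan (π / (2 * n)) * W ≤ ∑ i : Fin n, Real.sqrt ((e i).1 ^ 2 + (e i).2 ^ 2) := by
  have npos : 0 < n := by omega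
  set f : Fin n → ℝ → ℝ := fun i θ => (e i).1 * Real.cos θ + (e i).2 * Real.sin θ with hf
  have hfc : ∀ i, Continuous (f i) := fun i =>
    (continuous_const.mul Real.continuous_cos).add (continuous_const.mul Real.continuous_sin)
  set g : ℝ → ℝ := fun θ => ∑ i : Fin n, |f i θ| with hgdef
  have hgc : Continuous g := continuous_finset_sum _ fun i _ => (hfc i).abs
  have hgW : ∀ θ, 2 * W ≤ g θ := hg
  -- breakpoints
  set a : Fin n → ℝ := fun i =>
    if (e i).1 = 0 then 0 else π/2 + Real.arctan ((e i).2 / (e i).1) with ha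
  have ha0 : ∀ i, 0 ≤ a i ∧ a i < π := by
    intro i
    rw [ha]
    dsimp only
    split
    · exact ⟨le_refl 0, Real.pi_pos⟩
    · have h1 := Real.neg_pi_div_two_lt_arctan ((e i).2 / (e i).1)
      have h2 := Real.arctan_lt_pi_div_two ((e i).2 / (e i).1)
      constructor
      · linarith
      · linarith [Real.pi_pos]
  have haz : ∀ i, f i (a i) = 0 := by
    intro i
    by_cases hp : (e i).1 = 0
    · simp [hf, ha, hp]
    · have hco : Real.cos (Real.arctan ((e i).2 / (e i).1)) ≠ 0 := (Real.cos_arctan_pos _).ne'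
      have ht : Real.sin (Real.arctan ((e i).2 / (e i).1)) * (e i).1
          = (e i).2 * Real.cos (Real.arctan ((e i).2 / (e i).1)) := by
        have h1 := Real.tan_arctan ((e i).2 / (e i).1)
        rw [Real.tan_eq_sin_div_cos] at h1
        field_simp at h1
        linarith [h1]
      simp only [hf, ha, if_neg hp]
      rw [Real.cos_add, Real.sin_add, Real.cos_pi_div_two, Real.sin_pi_div_two]
      linear_combination -ht
  have hzero : ∀ i, e i ≠ 0 → ∀ θ, f i θ = 0 → ∃ m : ℤ, θ = a i + m * π := by
    intro i hei θ hfθ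
    have hz := haz i
    simp only [hf] at hz hfθ
    have h1 : (e i).1 * Real.sin (a i - θ) = 0 := by
      rw [Real.sin_sub]
      linear_combination Real.sin (a i) * hfθ - Real.sin θ * hz
    have h2 : (e i).2 * Real.sin (a i - θ) = 0 := by
      rw [Real.sin_sub]
      linear_combination Real.cos θ * hz - Real.cos (a i) * hfθ
    have hsin : Real.sin (a i - θ) = 0 := by
      by_contra hs
      apply hei
      have hp1 : (e i).1 = 0 := by
        rcases mul_eq_zero.1 h1 with h | h
        · exact h
        · exact absurd h hs
      have hp2 : (e i).2 = 0 := by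
        rcases mul_eq_zero.1 h2 with h | h
        · exact h
        · exact absurd h hs
      exact Prod.ext hp1 hp2
    rw [Real.sin_eq_zero_iff] at hsin
    obtain ⟨m, hm⟩ := hsin
    exact ⟨-m, by push_cast; linarith⟩
  -- sorted breakpoints
  set σ := Tuple.sort a with hσ
  set b : Fin n → ℝ := a ∘ σ with hb
  have hbmono : Monotone b := Tuple.monotone_sort a
  have hbval : ∀ i : Fin n, ∃ j : Fin n, b j = a i := fun i =>
    ⟨σ.symm i, by simp [hb]⟩
  set i0 : Fin n := ⟨0, npos⟩ with hi0
  set T : ℕ → ℝ := fun k => if h : k < n then b ⟨k, h⟩ else b i0 + π with hT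
  have hb00 : ∀ j : Fin n, b i0 ≤ b j := fun j => hbmono (by simp [hi0, Fin.le_def])
  have hbrange : ∀ j : Fin n, 0 ≤ b j ∧ b j < π := fun j => ha0 (σ j)
  have hTmono : ∀ ⦃j k⦄, j ≤ k → k ≤ n → T j ≤ T k := by
    intro j k hjk hkn
    rw [hT]
    dsimp only
    rcases lt_or_ge k n with hk | hk
    · rw [dif_pos hk, dif_pos (lt_of_le_of_lt hjk hk)]
      exact hbmono (by simpa [Fin.mk_le_mk] using hjk)
    · have hkn' : ¬ k < n := by omega
      rw [dif_neg hkn']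
      rcases lt_or_ge j n with hj | hj
      · rw [dif_pos hj]
        have h1 := (hbrange ⟨j, hj⟩).2
        have h2 := (hbrange i0).1
        linarith
      · rw [dif_neg (by omega)]
  have hTn : T n = T 0 + π := by
    rw [hT]
    dsimp only
    rw [dif_neg (lt_irrefl n), dif_pos npos]
  have hT0 : ∀ j : Fin n, T j.val = b j := fun j => by simp [hT, j.2, Fin.eta]
  have haT : ∀ i, T 0 ≤ a i ∧ a i < T 0 + π := by
    intro i
    obtain ⟨j, hj⟩ := hbval i
    have h1 : T 0 = b i0 := by rw [hT]; dsimp only; rw [dif_pos npos]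
    constructor
    · rw [h1, ← hj]; exact hb00 j
    · have h2 := (ha0 i).2
      have h3 := (hbrange i0).1
      rw [h1]
      linarith
  -- no zeros inside pieces
  have hnz : ∀ k, k < n → ∀ i, e i ≠ 0 → ∀ θ ∈ Set.Ioo (T k) (T (k+1)), f i θ ≠ 0 := by
    intro k hk i hei θ hθ hfz
    obtain ⟨m, hm⟩ := hzero i hei θ hfz
    obtain ⟨ha1, ha2⟩ := haT i
    have hTk : T 0 ≤ T k := hTmono (Nat.zero_le k) hk.le
    have hTk1 : T (k+1) ≤ T 0 + π := by rw [← hTn]; exact hTmono hk le_rfl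
    have hθ1 := hθ.1
    have hθ2 := hθ.2
    have hpi := Real.pi_pos
    rcases lt_trichotomy m 0 with hm0 | hm0 | hm0
    · have hmle : (m:ℝ) ≤ -1 := by exact_mod_cast (by omega : m ≤ -1)
      nlinarith
    · subst hm0
      push_cast at hm
      obtain ⟨j, hj⟩ := hbval i
      have hTj : T j.val = b j := hT0 j
      rcases le_or_gt j.val k with h | h
      · have hle := hTmono h hk.le
        rw [hTj, hj] at hle
        linarith
      · have hge := hTmono (show k+1 ≤ j.val from h) j.2.le
        rw [hTj, hj] at hge
        linarith
    · have hmge : (1:ℝ) ≤ (m:ℝ) := by exact_mod_cast hm0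
      nlinarith
  -- piece bound
  have hpiece : ∀ k, k < n →
      0 ≤ (T (k+1) - T k)/2 ∧ (T (k+1) - T k)/2 < π/2 ∧
      Real.tan ((T (k+1) - T k)/2) * (4 * W) ≤ ∫ θ in (T k)..(T (k+1)), g θ := by
    intro k hk
    have hcd : T k ≤ T (k+1) := hTmono (by omega) hk
    have hc1 : T 0 ≤ T k := hTmono (Nat.zero_le k) hk.le
    have hd2 : T (k+1) ≤ T 0 + π := by rw [← hTn]; exact hTmono hk le_rfl
    have hsigns : ∀ i : Fin n, ∃ s : ℝ, (s = 1 ∨ s = -1) ∧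
        ∀ θ ∈ Set.Icc (T k) (T (k+1)), |f i θ| = s * f i θ := by
      intro i
      by_cases he : e i = 0
      · refine ⟨1, Or.inl rfl, fun θ _ => ?_⟩
        have h1 : (e i).1 = 0 := by rw [he]; rfl
        have h2 : (e i).2 = 0 := by rw [he]; rfl
        simp [hf, h1, h2]
      · exact sign_lemma (hfc i) hcd (fun θ hθ => hnz k hk i he θ hθ)
    choose s hs1 hs2 using hsigns
    have hgh : ∀ θ ∈ Set.Icc (T k) (T (k+1)),
        g θ = (∑ i : Fin n, s i * (e i).1) * Real.cos θ
            + (∑ i : Fin n, s i * (e i).2) * Real.sin θ := by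
      intro θ hθ
      rw [hgdef]
      dsimp only
      rw [Finset.sum_congr rfl (fun i _ => hs2 i θ hθ)]
      rw [Finset.sum_mul, Finset.sum_mul, ← Finset.sum_add_distrib]
      refine Finset.sum_congr rfl fun i _ => ?_
      rw [hf]
      dsimp only
      ring
    have hpi := Real.pi_pos
    have hlen : T (k+1) - T k < π := by
      by_contra hcon
      push_neg at hcon
      have h1 : T (k+1) = T k + π := by linarith
      have e1 := hgh (T k) ⟨le_refl _, hcd⟩
      have e2 := hgh (T (k+1)) ⟨hcd, le_refl _⟩
      rw [h1, Real.cos_add_pi, Real.sin_add_pi] at e2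
      have w1 := hgW (T k)
      have w2 := hgW (T (k+1))
      rw [h1] at w2
      nlinarith
    refine ⟨by linarith, by linarith, ?_⟩
    have hcosne : Real.cos ((T (k+1) - T k)/2) ≠ 0 :=
      ne_of_gt (Real.cos_pos_of_mem_Ioo ⟨by linarith, by linarith⟩)
    have hint : (∫ θ in (T k)..(T (k+1)), g θ)
        = ∫ θ in (T k)..(T (k+1)), ((∑ i : Fin n, s i * (e i).1) * Real.cos θ
            + (∑ i : Fin n, s i * (e i).2) * Real.sin θ) :=
      intervalIntegral.integral_congr (fun θ hθ => by
        rw [Set.uIcc_of_le hcd] at hθ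
        exact hgh θ hθ)
    rw [hint, sin_int _ _ _ _ hcosne, ← hgh (T k) ⟨le_refl _, hcd⟩,
      ← hgh (T (k+1)) ⟨hcd, le_refl _⟩]
    have htan : 0 ≤ Real.tan ((T (k+1) - T k)/2) :=
      Real.tan_nonneg_of_nonneg_of_le_pi_div_two (by linarith) (by linarith)
    have w1 := hgW (T k)
    have w2 := hgW (T (k+1))
    nlinarith
  -- total integral
  have hperiodI : ∀ i, ∫ θ in (T 0)..(T 0 + π), |f i θ|
      = 2 * Real.sqrt ((e i).1^2 + (e i).2^2) := by
    intro i
    have hpi := Real.pi_pos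
    have hper : Function.Periodic (fun θ => |f i θ|) π := by
      intro θ
      have hneg : f i (θ + π) = -(f i θ) := by
        simp only [hf]
        rw [Real.cos_add_pi, Real.sin_add_pi]
        ring
      simp only [hneg, abs_neg]
    rw [hper.intervalIntegral_add_eq (T 0) (a i)]
    by_cases he : e i = 0
    · have h1 : (e i).1 = 0 := by rw [he]; rfl
      have h2 : (e i).2 = 0 := by rw [he]; rfl
      simp [hf, h1, h2]
    · have hno : ∀ θ ∈ Set.Ioo (a i) (a i + π), f i θ ≠ 0 := by
        intro θ hθ h0
        obtain ⟨m, hm⟩ := hzero i he θ h0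
        rcases le_or_gt m 0 with h | h
        · have hc : (m:ℝ) ≤ 0 := by exact_mod_cast h
          nlinarith [hθ.1]
        · have hc : (1:ℝ) ≤ (m:ℝ) := by exact_mod_cast h
          nlinarith [hθ.2]
      obtain ⟨s, hs1, hs2⟩ := sign_lemma (hfc i) (by linarith) hno
      have habs : |s| = 1 := by rcases hs1 with h | h <;> rw [h] <;> norm_num
      have hchain : (∫ θ in (a i)..(a i + π), |f i θ|)
          = s * (2 * ((e i).2 * Real.cos (a i) - (e i).1 * Real.sin (a i))) := by
        rw [intervalIntegral.integral_congr (g := fun θ => s * f i θ)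
          (fun θ hθ => by rw [Set.uIcc_of_le (by linarith)] at hθ; exact hs2 θ hθ)]
        rw [intervalIntegral.integral_const_mul]
        congr 1
        simp only [hf]
        rw [lin_int, Real.sin_add_pi, Real.cos_add_pi]
        ring
      have h0int : (0:ℝ) ≤ ∫ θ in (a i)..(a i + π), |f i θ| :=
        intervalIntegral.integral_nonneg (by linarith) (fun θ _ => abs_nonneg _)
      rw [hchain]
      rw [hchain] at h0int
      have hz := haz i
      simp only [hf] at hz
      have hD : ((e i).2 * Real.cos (a i) - (e i).1 * Real.sin (a i))^2
          = (e i).1^2 + (e i).2^2 := by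
        linear_combination ((e i).1^2 + (e i).2^2) * (Real.sin_sq_add_cos_sq (a i))
          - ((e i).1 * Real.cos (a i) + (e i).2 * Real.sin (a i)) * hz
      calc s * (2 * ((e i).2 * Real.cos (a i) - (e i).1 * Real.sin (a i)))
          = |s * (2 * ((e i).2 * Real.cos (a i) - (e i).1 * Real.sin (a i)))| :=
            (abs_of_nonneg h0int).symm
        _ = |s| * (2 * |(e i).2 * Real.cos (a i) - (e i).1 * Real.sin (a i)|) := by
            rw [abs_mul, abs_mul]
            norm_num
        _ = 2 * Real.sqrt ((e i).1^2 + (e i).2^2) := by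
            rw [habs, ← hD, Real.sqrt_sq_eq_abs]
            ring
  have hsplit : ∑ k ∈ Finset.range n, ∫ θ in (T k)..(T (k+1)), g θ = ∫ θ in (T 0)..(T n), g θ :=
    intervalIntegral.sum_integral_adjacent_intervals fun k _ => hgc.intervalIntegrable _ _
  have htot : ∫ θ in (T 0)..(T n), g θ = 2 * ∑ i : Fin n, Real.sqrt ((e i).1^2 + (e i).2^2) := by
    rw [hTn]
    rw [show (∫ θ in (T 0)..(T 0 + π), g θ) = ∑ i : Fin n, ∫ θ in (T 0)..(T 0 + π), |f i θ| from
      intervalIntegral.integral_finset_sum fun i _ => ((hfc i).abs.intervalIntegrable _ _)]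
    rw [Finset.sum_congr rfl fun i _ => hperiodI i, ← Finset.mul_sum]
  -- Jensen
  have hsumd : ∑ k ∈ Finset.range n, (T (k+1) - T k)/2 = π/2 := by
    rw [← Finset.sum_div, Finset.sum_range_sub T n, hTn]
    ring
  set y : ℝ := π / (2*n) with hy
  have hy0 : 0 < y := by
    have := Real.pi_pos
    have : (0:ℝ) < n := by exact_mod_cast npos
    rw [hy]; positivity
  have hyy : y < π/2 := by
    rw [hy]
    rw [div_lt_div_iff₀ (by positivity) (by norm_num)]
    have h3 : (3:ℝ) ≤ n := by exact_mod_cast hn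
    nlinarith [Real.pi_pos]
  have hny : (n:ℝ) * y = π/2 := by
    rw [hy]
    field_simp
  have hJ : (n : ℝ) * Real.tan y ≤ ∑ k ∈ Finset.range n, Real.tan ((T (k+1) - T k)/2) := by
    have hstep : ∀ k ∈ Finset.range n,
        Real.tan y + ((T (k+1) - T k)/2 - y) * (1 + Real.tan y ^ 2)
          ≤ Real.tan ((T (k+1) - T k)/2) := by
      intro k hk
      have h := hpiece k (Finset.mem_range.1 hk)
      exact tan_tl hy0 hyy h.1 h.2.1
    calc (n : ℝ) * Real.tan y
        = ∑ k ∈ Finset.range n, (Real.tan y + ((T (k+1) - T k)/2 - y) * (1 + Real.tan y ^ 2)) := by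
          rw [Finset.sum_add_distrib, Finset.sum_const, Finset.card_range, ← Finset.sum_mul,
            Finset.sum_sub_distrib, hsumd, Finset.sum_const, Finset.card_range]
          rw [nsmul_eq_mul, nsmul_eq_mul, ← hny]
          ring
      _ ≤ _ := Finset.sum_le_sum hstep
  -- final chain
  have hchain : 4 * W * ((n:ℝ) * Real.tan y)
      ≤ 2 * ∑ i : Fin n, Real.sqrt ((e i).1^2 + (e i).2^2) := by
    rw [← htot, ← hsplit]
    calc 4 * W * ((n:ℝ) * Real.tan y)
        ≤ 4 * W * ∑ k ∈ Finset.range n, Real.tan ((T (k+1) - T k)/2) := by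
          apply mul_le_mul_of_nonneg_left hJ (by linarith)
      _ = ∑ k ∈ Finset.range n, Real.tan ((T (k+1) - T k)/2) * (4 * W) := by
          rw [Finset.mul_sum]; apply Finset.sum_congr rfl; intros; ring
      _ ≤ ∑ k ∈ Finset.range n, ∫ θ in (T k)..(T (k+1)), g θ :=
          Finset.sum_le_sum fun k hk => (hpiece k (Finset.mem_range.1 hk)).2.2
  linarith

/-- Audet–Hansen–Messine: for every convex polygon `P` with `n ≥ 3` vertices,
`W(P)/L(P) ≤ (1/(2n))·cot(π/(2n))`. Convexity is expressed by requiring every vertex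
to lie on the left of every (counterclockwise-oriented) side. -/
theorem width_perimeter_ratio (n : ℕ) [NeZero n] (hn : 3 ≤ n) (v : Fin n → ℝ × ℝ)
    (hconv : ∀ i k : Fin n, 0 ≤ cross (v i) (v (i+1)) (v k)) :
    polygonWidth v / polygonPerimeter v ≤ 1 / (2*n) * (Real.tan (π / (2*n)))⁻¹ := by
  have npos : 0 < n := by omega
  have hnR : (3:ℝ) ≤ (n:ℝ) := by exact_mod_cast hn
  have hpi := Real.pi_pos
  have hy0 : 0 < π / (2*(n:ℝ)) := by positivity
  have hyy : π / (2*(n:ℝ)) < π/2 := by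
    rw [div_lt_div_iff₀ (by positivity) (by norm_num)]
    nlinarith
  have htanpos : 0 < Real.tan (π / (2*(n:ℝ))) :=
    Real.tan_pos_of_pos_of_lt_pi_div_two hy0 hyy
  have hnn : ∀ θ : ℝ,
      (Finset.univ.inf' Finset.univ_nonempty
        fun i : Fin n => (v i).1 * Real.cos θ + (v i).2 * Real.sin θ) ≤
      (Finset.univ.sup' Finset.univ_nonempty
        fun i : Fin n => (v i).1 * Real.cos θ + (v i).2 * Real.sin θ) := by
    intro θ
    obtain ⟨i⟩ := (inferInstance : Nonempty (Fin n))
    exact le_trans (Finset.inf'_le _ (Finset.mem_univ i))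
      (Finset.le_sup' (fun i : Fin n => (v i).1 * Real.cos θ + (v i).2 * Real.sin θ)
        (Finset.mem_univ i))
  have hW0 : 0 ≤ polygonWidth v :=
    le_ciInf fun θ => sub_nonneg.2 (hnn θ)
  have hL0 : 0 ≤ polygonPerimeter v :=
    Finset.sum_nonneg fun i _ => Real.sqrt_nonneg _
  rcases eq_or_lt_of_le hW0 with hW | hW
  · rw [← hW, zero_div]
    positivity
  · set e : Fin n → ℝ × ℝ := fun i => ((v (i+1)).1 - (v i).1, (v (i+1)).2 - (v i).2) with he
    have hbdd : BddBelow (Set.range fun θ : ℝ =>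
        ((Finset.univ.sup' Finset.univ_nonempty
            fun i : Fin n => (v i).1 * Real.cos θ + (v i).2 * Real.sin θ) -
         (Finset.univ.inf' Finset.univ_nonempty
            fun i : Fin n => (v i).1 * Real.cos θ + (v i).2 * Real.sin θ))) := by
      refine ⟨0, ?_⟩
      rintro x ⟨θ, rfl⟩
      exact sub_nonneg.2 (hnn θ)
    have hg : ∀ θ : ℝ, 2 * polygonWidth v
        ≤ ∑ i : Fin n, |(e i).1 * Real.cos θ + (e i).2 * Real.sin θ| := by
      intro θ
      obtain ⟨j, _, hj⟩ := Finset.exists_mem_eq_sup' (Finset.univ_nonempty)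
        (fun i : Fin n => (v i).1 * Real.cos θ + (v i).2 * Real.sin θ)
      obtain ⟨k, _, hk⟩ := Finset.exists_mem_eq_inf' (Finset.univ_nonempty)
        (fun i : Fin n => (v i).1 * Real.cos θ + (v i).2 * Real.sin θ)
      have h1 : polygonWidth v ≤
          (Finset.univ.sup' Finset.univ_nonempty
            fun i : Fin n => (v i).1 * Real.cos θ + (v i).2 * Real.sin θ) -
          (Finset.univ.inf' Finset.univ_nonempty
            fun i : Fin n => (v i).1 * Real.cos θ + (v i).2 * Real.sin θ) :=
        ciInf_le hbdd θ
      have h2 := cyc_tv (fun i : Fin n => (v i).1 * Real.cos θ + (v i).2 * Real.sin θ) j k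
      have h3 : ∑ i : Fin n,
          |(fun i : Fin n => (v i).1 * Real.cos θ + (v i).2 * Real.sin θ) (i+1)
            - (fun i : Fin n => (v i).1 * Real.cos θ + (v i).2 * Real.sin θ) i|
          = ∑ i : Fin n, |(e i).1 * Real.cos θ + (e i).2 * Real.sin θ| := by
        refine Finset.sum_congr rfl fun i _ => ?_
        rw [he]
        dsimp only
        ring_nf
      rw [h3] at h2
      rw [hj, hk] at h1
      linarith
    have hkey := key hn e hW hg
    have hperim : polygonPerimeter v = ∑ i : Fin n, Real.sqrt ((e i).1 ^ 2 + (e i).2 ^ 2) := rfl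
    rw [← hperim] at hkey
    have hLpos : 0 < polygonPerimeter v :=
      lt_of_lt_of_le (mul_pos (mul_pos (by nlinarith) htanpos) hW) hkey
    rw [div_le_iff₀ hLpos]
    have hcalc : polygonWidth v = (1/(2*(n:ℝ)) * (Real.tan (π/(2*(n:ℝ))))⁻¹)
        * (2 * (n:ℝ) * Real.tan (π/(2*(n:ℝ))) * polygonWidth v) := by
      field_simp
    rw [hcalc]
    exact mul_le_mul_of_nonneg_left hkey (by positivity)
end

section
/- If P is a convex equilateral small octagon (unit diameter, 8 equal sides of length c) then c ≥ 2·W(P)·tan(π/16), where W(P) is the width of P. -/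
open Real
open Fin.CommRing

/-! ### Auxiliary lemmas -/

lemma abs_sin_sub_comm (x y : ℝ) : |Real.sin (x - y)| = |Real.sin (y - x)| := by
  rw [show x - y = -(y - x) by ring, Real.sin_neg, abs_neg]

/-- Telescoping: moving `m` steps along the cycle. -/
lemma octagon_chain (p : Fin 8 → ℝ) (b : Fin 8) (m : ℕ) :
    |p (b + (m : Fin 8)) - p b| ≤
      ∑ k ∈ Finset.range m, |p (b + (k : Fin 8) + 1) - p (b + (k : Fin 8))| := by
  induction m with
  | zero => simp
  | succ m ih =>
    rw [Finset.sum_range_succ]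
    have hcast : ((m + 1 : ℕ) : Fin 8) = (m : Fin 8) + 1 := by push_cast; ring
    have h1 : |p (b + ((m + 1 : ℕ) : Fin 8)) - p b| ≤
        |p (b + (m : Fin 8) + 1) - p (b + (m : Fin 8))| + |p (b + (m : Fin 8)) - p b| := by
      rw [hcast, ← add_assoc]
      exact abs_sub_le _ _ _
    linarith

/-- Two chains around the cycle: `2 (p a - p b) ≤ ∑ |edge increments|`. -/
lemma octagon_two_chain (p : Fin 8 → ℝ) (a b : Fin 8) :
    2 * (p a - p b) ≤ ∑ i : Fin 8, |p (i + 1) - p i| := by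
  set f : Fin 8 → ℝ := fun i => |p (i + 1) - p i| with hf
  set j : ℕ := (a - b).val with hj
  have hjlt : j < 8 := (a - b).isLt
  have hjc : (j : Fin 8) = a - b := Fin.cast_val_eq_self _
  have h1 : p a - p b ≤ ∑ k ∈ Finset.range j, f (b + (k : Fin 8)) := by
    have := octagon_chain p b j
    rw [hjc] at this
    have hb : b + (a - b) = a := by abel
    rw [hb] at this
    exact le_trans (le_abs_self _) this
  have h8 : ((8 - j : ℕ) : Fin 8) = b - a := by
    rw [Nat.cast_sub hjlt.le, hjc]
    have : ((8 : ℕ) : Fin 8) = 0 := by decide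
    rw [this]
    abel
  have h2 : p a - p b ≤ ∑ k ∈ Finset.range (8 - j), f (a + (k : Fin 8)) := by
    have := octagon_chain p a (8 - j)
    rw [h8] at this
    have hb : a + (b - a) = b := by abel
    rw [hb, abs_sub_comm] at this
    exact le_trans (le_abs_self _) this
  have hsplit : ∑ k ∈ Finset.range 8, f (b + (k : Fin 8)) =
      (∑ k ∈ Finset.range j, f (b + (k : Fin 8))) +
        ∑ k ∈ Finset.range (8 - j), f (a + (k : Fin 8)) := by
    have hj8 : j + (8 - j) = 8 := by omega
    have hadd := Finset.sum_range_add (fun k : ℕ => f (b + (k : Fin 8))) j (8 - j)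
    rw [hj8] at hadd
    rw [hadd]
    congr 1
    refine Finset.sum_congr rfl fun k _ => ?_
    congr 1
    have : ((j + k : ℕ) : Fin 8) = (j : Fin 8) + (k : Fin 8) := by push_cast; ring
    rw [this, hjc]
    abel
  have hall : ∑ k ∈ Finset.range 8, f (b + (k : Fin 8)) = ∑ i : Fin 8, f i := by
    rw [← Fin.sum_univ_eq_sum_range (fun k => f (b + (k : Fin 8))) 8]
    simp only [Fin.cast_val_eq_self]
    exact Equiv.sum_comp (Equiv.addLeft b) f
  have hfin := add_le_add h1 h2
  rw [← hsplit, hall] at hfin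
  linarith [hfin]

/-- Jensen's inequality for `sin` on `[0, π]` with 8 points. -/
lemma octagon_jensen_sin (d : Fin 8 → ℝ) (hd : ∀ i, d i ∈ Set.Icc (0:ℝ) π) :
    ∑ i : Fin 8, Real.sin (d i) ≤ 8 * Real.sin ((∑ i : Fin 8, d i) / 8) := by
  have h := (strictConcaveOn_sin_Icc.concaveOn).le_map_sum (t := Finset.univ)
      (w := fun _ : Fin 8 => (8:ℝ)⁻¹) (p := d)
      (fun i _ => by norm_num) (by simp) (fun i _ => hd i)
  simp only [smul_eq_mul] at h
  have h1 : ∑ i : Fin 8, (8:ℝ)⁻¹ * Real.sin (d i) = (∑ i : Fin 8, Real.sin (d i)) / 8 := by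
    rw [← Finset.mul_sum]; ring
  have h2 : ∑ i : Fin 8, (8:ℝ)⁻¹ * d i = (∑ i : Fin 8, d i) / 8 := by
    rw [← Finset.mul_sum]; ring
  rw [h1, h2] at h
  linarith

/-- `|sin (x + n π)| = |sin x|`. -/
lemma abs_sin_add_int_mul_pi (x : ℝ) (n : ℤ) : |Real.sin (x + n * π)| = |Real.sin x| := by
  rw [Real.sin_add, Real.sin_int_mul_pi, mul_zero, add_zero, abs_mul,
    Real.abs_cos_int_mul_pi, mul_one]

/-- Telescoping identity: `∑_{k<8} sin (kπ/8) = cot (π/16)`. -/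
lemma octagon_sum_sin : ∑ k ∈ Finset.range 8, Real.sin ((k : ℝ) * π / 8) =
    Real.cos (π / 16) / Real.sin (π / 16) := by
  have hs : 0 < Real.sin (π / 16) :=
    Real.sin_pos_of_pos_of_lt_pi (by positivity) (by linarith [Real.pi_pos])
  rw [eq_div_iff hs.ne', Finset.sum_mul]
  have key : ∀ k : ℕ, Real.sin ((k : ℝ) * π / 8) * Real.sin (π / 16) =
      ((fun m : ℕ => Real.cos ((2 * (m : ℝ) - 1) * π / 16)) k -
       (fun m : ℕ => Real.cos ((2 * (m : ℝ) - 1) * π / 16)) (k + 1)) / 2 := by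
    intro k
    simp only
    have h := Real.cos_sub_cos ((2 * ((k : ℝ) + 1) - 1) * π / 16) ((2 * (k : ℝ) - 1) * π / 16)
    have h1 : (((2 * ((k : ℝ) + 1) - 1) * π / 16) + ((2 * (k : ℝ) - 1) * π / 16)) / 2
        = (k : ℝ) * π / 8 := by ring
    have h2 : (((2 * ((k : ℝ) + 1) - 1) * π / 16) - ((2 * (k : ℝ) - 1) * π / 16)) / 2
        = π / 16 := by ring
    rw [h1, h2] at h
    push_cast
    linarith
  calc ∑ k ∈ Finset.range 8, Real.sin ((k : ℝ) * π / 8) * Real.sin (π / 16)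
      = ∑ k ∈ Finset.range 8,
          ((fun m : ℕ => Real.cos ((2 * (m : ℝ) - 1) * π / 16)) k -
           (fun m : ℕ => Real.cos ((2 * (m : ℝ) - 1) * π / 16)) (k + 1)) / 2 :=
        Finset.sum_congr rfl fun k _ => key k
    _ = ((fun m : ℕ => Real.cos ((2 * (m : ℝ) - 1) * π / 16)) 0 -
         (fun m : ℕ => Real.cos ((2 * (m : ℝ) - 1) * π / 16)) 8) / 2 := by
        rw [← Finset.sum_div, Finset.sum_range_sub']
    _ = Real.cos (π / 16) := by
        simp only
        have e0 : (2 * ((0 : ℕ) : ℝ) - 1) * π / 16 = -(π / 16) := by push_cast; ring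
        have e8 : (2 * ((8 : ℕ) : ℝ) - 1) * π / 16 = π - π / 16 := by push_cast; ring
        rw [e0, e8, Real.cos_neg, Real.cos_pi_sub]
        ring

/-- Core estimate for sorted angles in `[0, π)`. -/
lemma octagon_sorted_sum (a : Fin 8 → ℝ) (hmono : Monotone a)
    (ha : ∀ i, a i ∈ Set.Ico (0:ℝ) π) :
    ∑ j : Fin 8, ∑ i : Fin 8, |Real.sin (a i - a j)| ≤
      8 * (Real.cos (π / 16) / Real.sin (π / 16)) := by
  -- reindex the double sum by cyclic distance k
  have hre : ∑ j : Fin 8, ∑ i : Fin 8, |Real.sin (a i - a j)| =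
      ∑ k ∈ Finset.range 8, ∑ i : Fin 8, |Real.sin (a (i + (k : Fin 8)) - a i)| := by
    rw [Finset.sum_comm]
    have : ∀ i : Fin 8, ∑ j : Fin 8, |Real.sin (a i - a j)| =
        ∑ k ∈ Finset.range 8, |Real.sin (a i - a (i + (k : Fin 8)))| := by
      intro i
      rw [← Fin.sum_univ_eq_sum_range (fun k => |Real.sin (a i - a (i + (k : Fin 8)))|) 8]
      simp only [Fin.cast_val_eq_self]
      exact (Equiv.sum_comp (Equiv.addLeft i) (fun j => |Real.sin (a i - a j)|)).symm
    rw [Finset.sum_congr rfl fun i _ => this i, Finset.sum_comm]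
    refine Finset.sum_congr rfl fun k _ => Finset.sum_congr rfl fun i _ => ?_
    exact abs_sin_sub_comm _ _
  rw [hre]
  have hbound : ∀ k ∈ Finset.range 8,
      ∑ i : Fin 8, |Real.sin (a (i + (k : Fin 8)) - a i)| ≤
        8 * Real.sin ((k : ℝ) * π / 8) := by
    intro k hk
    rw [Finset.mem_range] at hk
    set d : Fin 8 → ℝ := fun i =>
      if (i : ℕ) + k < 8 then a (i + (k : Fin 8)) - a i
      else a (i + (k : Fin 8)) + π - a i with hd
    have hval : ∀ i : Fin 8, ((i + (k : Fin 8) : Fin 8) : ℕ) = ((i : ℕ) + k) % 8 := by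
      intro i
      rw [Fin.val_add, Fin.val_natCast]
      omega
    have hdmem : ∀ i, d i ∈ Set.Icc (0:ℝ) π := by
      intro i
      have hia := ha i
      have hika := ha (i + (k : Fin 8))
      by_cases hc : (i : ℕ) + k < 8
      · have hle : i ≤ i + (k : Fin 8) := by
          rw [Fin.le_def, hval i]
          omega
        have := hmono hle
        simp only [hd, hc, if_true]
        constructor <;> [linarith; linarith [hia.1, hika.2]]
      · have hle : i + (k : Fin 8) ≤ i := by
          rw [Fin.le_def, hval i]
          omega
        have := hmono hle
        simp only [hd, hc, if_false]
        constructor <;> [linarith [hia.2, hika.1]; linarith]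
    have habs : ∀ i : Fin 8, |Real.sin (a (i + (k : Fin 8)) - a i)| = Real.sin (d i) := by
      intro i
      have hia := ha i
      have hika := ha (i + (k : Fin 8))
      by_cases hc : (i : ℕ) + k < 8
      · have hle : i ≤ i + (k : Fin 8) := by rw [Fin.le_def, hval i]; omega
        have hm := hmono hle
        simp only [hd, hc, if_true]
        exact abs_of_nonneg (Real.sin_nonneg_of_nonneg_of_le_pi (by linarith)
          (by linarith [hika.2, hia.1]))
      · have hle : i + (k : Fin 8) ≤ i := by rw [Fin.le_def, hval i]; omega
        have hm := hmono hle
        simp only [hd, hc, if_false]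
        have h1 : Real.sin (a (i + (k : Fin 8)) + π - a i)
            = Real.sin (a i - a (i + (k : Fin 8))) := by
          rw [show a (i + (k : Fin 8)) + π - a i = π - (a i - a (i + (k : Fin 8))) by ring,
            Real.sin_pi_sub]
        have hnn : 0 ≤ Real.sin (a i - a (i + (k : Fin 8))) :=
          Real.sin_nonneg_of_nonneg_of_le_pi (by linarith) (by linarith [hia.2, hika.1])
        rw [h1, show a (i + (k : Fin 8)) - a i = -(a i - a (i + (k : Fin 8))) by ring,
          Real.sin_neg, abs_neg, abs_of_nonneg hnn]
    have hsum : ∑ i : Fin 8, d i = (k : ℝ) * π := by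
      have hdsplit : ∀ i : Fin 8, d i = (a (i + (k : Fin 8)) - a i) +
          (if (i : ℕ) + k < 8 then (0:ℝ) else π) := by
        intro i
        by_cases hc : (i : ℕ) + k < 8
        · simp [hd, hc]
        · simp only [hd, hc, if_false]
          ring
      rw [Finset.sum_congr rfl fun i _ => hdsplit i, Finset.sum_add_distrib]
      have hz : ∑ i : Fin 8, (a (i + (k : Fin 8)) - a i) = 0 := by
        rw [Finset.sum_sub_distrib]
        have h := Equiv.sum_comp (Equiv.addRight ((k : Fin 8))) a
        exact sub_eq_zero.mpr h
      have hcard : (Finset.univ.filter fun i : Fin 8 => ¬ ((i : ℕ) + k < 8)).card = k := by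
        interval_cases k <;> decide
      have hw : ∑ i : Fin 8, (if (i : ℕ) + k < 8 then (0:ℝ) else π) = (k : ℝ) * π := by
        rw [Finset.sum_ite, Finset.sum_const_zero, Finset.sum_const, zero_add, hcard,
          nsmul_eq_mul]
      rw [hz, hw, zero_add]
    calc ∑ i : Fin 8, |Real.sin (a (i + (k : Fin 8)) - a i)|
        = ∑ i : Fin 8, Real.sin (d i) := Finset.sum_congr rfl fun i _ => habs i
      _ ≤ 8 * Real.sin ((∑ i : Fin 8, d i) / 8) := octagon_jensen_sin d hdmem
      _ = 8 * Real.sin ((k : ℝ) * π / 8) := by rw [hsum]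
  calc ∑ k ∈ Finset.range 8, ∑ i : Fin 8, |Real.sin (a (i + (k : Fin 8)) - a i)|
      ≤ ∑ k ∈ Finset.range 8, 8 * Real.sin ((k : ℝ) * π / 8) :=
        Finset.sum_le_sum hbound
    _ = 8 * (Real.cos (π / 16) / Real.sin (π / 16)) := by
        rw [← Finset.mul_sum, octagon_sum_sin]

/-- There is a good direction: some `j` with small total `|sin|`. -/
lemma octagon_good_dir (φ : Fin 8 → ℝ) :
    ∃ j : Fin 8, ∑ i : Fin 8, |Real.sin (φ i - φ j)| ≤
      Real.cos (π / 16) / Real.sin (π / 16) := by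
  set a : Fin 8 → ℝ := fun i => π * Int.fract (φ i / π) with ha
  have hpi := Real.pi_pos
  have hmem : ∀ i, a i ∈ Set.Ico (0:ℝ) π := by
    intro i
    constructor
    · exact mul_nonneg hpi.le (Int.fract_nonneg _)
    · have := Int.fract_lt_one (φ i / π)
      calc a i < π * 1 := by
            exact (mul_lt_mul_iff_right₀ hpi).mpr this
        _ = π := mul_one π
  have hdiff : ∀ i j : Fin 8, |Real.sin (φ i - φ j)| = |Real.sin (a i - a j)| := by
    intro i j
    have h1 : φ i - φ j = (a i - a j) + ((⌊φ i / π⌋ - ⌊φ j / π⌋ : ℤ) : ℝ) * π := by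
      simp only [ha, Int.fract]
      push_cast
      field_simp
      ring
    rw [h1, abs_sin_add_int_mul_pi]
  -- sort the angles
  set σ := Tuple.sort a with hσ
  set g : Fin 8 → ℝ := fun i => a (σ i) with hg
  have hmono : Monotone g := Tuple.monotone_sort a
  have hgmem : ∀ i, g i ∈ Set.Ico (0:ℝ) π := fun i => hmem (σ i)
  have hperm : ∑ j : Fin 8, ∑ i : Fin 8, |Real.sin (a i - a j)| =
      ∑ j : Fin 8, ∑ i : Fin 8, |Real.sin (g i - g j)| := by
    rw [← Equiv.sum_comp σ (fun j => ∑ i : Fin 8, |Real.sin (a i - a j)|)]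
    refine Finset.sum_congr rfl fun j _ => ?_
    exact (Equiv.sum_comp σ (fun i => |Real.sin (a i - a (σ j))|)).symm
  have htotal : ∑ j : Fin 8, ∑ i : Fin 8, |Real.sin (φ i - φ j)| ≤
      8 * (Real.cos (π / 16) / Real.sin (π / 16)) := by
    have : ∑ j : Fin 8, ∑ i : Fin 8, |Real.sin (φ i - φ j)| =
        ∑ j : Fin 8, ∑ i : Fin 8, |Real.sin (a i - a j)| :=
      Finset.sum_congr rfl fun j _ => Finset.sum_congr rfl fun i _ => hdiff i j
    rw [this, hperm]
    exact octagon_sorted_sum g hmono hgmem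
  have hne : (Finset.univ : Finset (Fin 8)).Nonempty := Finset.univ_nonempty
  have hconst : ∑ _j : Fin 8, Real.cos (π / 16) / Real.sin (π / 16) =
      8 * (Real.cos (π / 16) / Real.sin (π / 16)) := by
    rw [Finset.sum_const, Finset.card_univ, Fintype.card_fin, nsmul_eq_mul]
    norm_num
  obtain ⟨j, _, hj⟩ := Finset.exists_le_of_sum_le
    (f := fun j : Fin 8 => ∑ i : Fin 8, |Real.sin (φ i - φ j)|)
    (g := fun _ : Fin 8 => Real.cos (π / 16) / Real.sin (π / 16))
    hne (by rw [hconst]; exact htotal)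
  exact ⟨j, hj⟩

/-- For a convex equilateral small octagon (unit diameter, eight equal sides of
length `c`), the side length satisfies `c ≥ 2·W(P)·tan(π/16)`. -/
theorem equilateral_small_octagon_side_bound (v : Fin 8 → ℝ × ℝ) (c : ℝ)
    (hconv : ∀ i k : Fin 8, 0 ≤ cross (v i) (v (i+1)) (v k))
    (hsmall : ∀ i j : Fin 8, dist2 (v i) (v j) ≤ 1)
    (hdiam : ∃ i j : Fin 8, dist2 (v i) (v j) = 1)
    (hequi : ∀ i : Fin 8, dist2 (v i) (v (i+1)) = c) :
    c ≥ 2 * polygonWidth v * Real.tan (π/16) := by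
  have hpi := Real.pi_pos
  have hc0 : 0 ≤ c := (hequi 0) ▸ Real.sqrt_nonneg _
  -- edge vectors and their polar angles
  set e : Fin 8 → ℝ × ℝ := fun i => ((v (i + 1)).1 - (v i).1, (v (i + 1)).2 - (v i).2) with he
  have hnorm : ∀ i, Real.sqrt ((e i).1 ^ 2 + (e i).2 ^ 2) = c := by
    intro i
    have := hequi i
    rw [dist2] at this
    rw [← this]
    congr 1 <;> ring
  set φ : Fin 8 → ℝ := fun i => Complex.arg ((e i).1 + (e i).2 * Complex.I) with hφ
  have hcs : ∀ i, (e i).1 = c * Real.cos (φ i) ∧ (e i).2 = c * Real.sin (φ i) := by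
    intro i
    set z : ℂ := (e i).1 + (e i).2 * Complex.I with hz
    have habs : ‖z‖ = c := by
      rw [Complex.norm_def, Complex.normSq_apply]
      have hre : z.re = (e i).1 := by simp [hz]
      have him : z.im = (e i).2 := by simp [hz]
      rw [hre, him, ← hnorm i]
      congr 1 <;> ring
    have h := Complex.norm_mul_cos_add_sin_mul_I z
    rw [habs, ← Complex.ofReal_cos, ← Complex.ofReal_sin] at h
    constructor
    · have h' := congrArg Complex.re h
      simp only [hz, Complex.add_re, Complex.mul_re, Complex.ofReal_re, Complex.ofReal_im,
        Complex.I_re, Complex.I_im, Complex.add_im, Complex.mul_im] at h'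
      simp only [he, hφ]
      linarith [h']
    · have h' := congrArg Complex.im h
      simp only [hz, Complex.add_re, Complex.mul_re, Complex.ofReal_re, Complex.ofReal_im,
        Complex.I_re, Complex.I_im, Complex.add_im, Complex.mul_im] at h'
      simp only [he, hφ]
      linarith [h']
  obtain ⟨j, hj⟩ := octagon_good_dir φ
  set θ : ℝ := φ j + π / 2 with hθ
  set p : Fin 8 → ℝ := fun i => (v i).1 * Real.cos θ + (v i).2 * Real.sin θ with hp
  -- each edge increment
  have hedge : ∀ i : Fin 8, |p (i + 1) - p i| = c * |Real.sin (φ i - φ j)| := by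
    intro i
    have h1 : p (i + 1) - p i = (e i).1 * Real.cos θ + (e i).2 * Real.sin θ := by
      simp only [hp, he]
      ring
    have h2 : (e i).1 * Real.cos θ + (e i).2 * Real.sin θ = c * Real.cos (φ i - θ) := by
      rw [(hcs i).1, (hcs i).2, Real.cos_sub]
      ring
    have h3 : Real.cos (φ i - θ) = Real.sin (φ i - φ j) := by
      rw [hθ, show φ i - (φ j + π / 2) = (φ i - φ j) - π / 2 by ring,
        Real.cos_sub_pi_div_two]
    rw [h1, h2, h3, abs_mul, abs_of_nonneg hc0]
  -- width ≤ extent in direction θ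
  have hbdd : BddBelow (Set.range fun θ' : ℝ =>
      ((Finset.univ.sup' Finset.univ_nonempty
          fun i => (v i).1 * Real.cos θ' + (v i).2 * Real.sin θ') -
       (Finset.univ.inf' Finset.univ_nonempty
          fun i => (v i).1 * Real.cos θ' + (v i).2 * Real.sin θ'))) := by
    refine ⟨0, ?_⟩
    rintro x ⟨θ', rfl⟩
    have h1 := Finset.inf'_le (f := fun i => (v i).1 * Real.cos θ' + (v i).2 * Real.sin θ')
      (Finset.mem_univ (0 : Fin 8))
    have h2 := Finset.le_sup' (f := fun i => (v i).1 * Real.cos θ' + (v i).2 * Real.sin θ')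
      (Finset.mem_univ (0 : Fin 8))
    simp only [sub_nonneg]
    exact le_trans h1 h2
  have hWle : polygonWidth v ≤
      (Finset.univ.sup' Finset.univ_nonempty p - Finset.univ.inf' Finset.univ_nonempty p) := by
    exact ciInf_le hbdd θ
  -- extent bound via the two chains
  obtain ⟨ia, _, hia⟩ := Finset.exists_mem_eq_sup' (Finset.univ_nonempty) p
  obtain ⟨ib, _, hib⟩ := Finset.exists_mem_eq_inf' (Finset.univ_nonempty) p
  have hext : 2 * (Finset.univ.sup' Finset.univ_nonempty p -
      Finset.univ.inf' Finset.univ_nonempty p) ≤ ∑ i : Fin 8, |p (i + 1) - p i| := by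
    rw [hia, hib]
    exact octagon_two_chain p ia ib
  have hsum : ∑ i : Fin 8, |p (i + 1) - p i| ≤ c * (Real.cos (π/16) / Real.sin (π/16)) := by
    calc ∑ i : Fin 8, |p (i + 1) - p i| = ∑ i : Fin 8, c * |Real.sin (φ i - φ j)| :=
          Finset.sum_congr rfl fun i _ => hedge i
      _ = c * ∑ i : Fin 8, |Real.sin (φ i - φ j)| := by rw [Finset.mul_sum]
      _ ≤ c * (Real.cos (π/16) / Real.sin (π/16)) := by
          exact mul_le_mul_of_nonneg_left hj hc0
  have hkey : 2 * polygonWidth v ≤ c * (Real.cos (π/16) / Real.sin (π/16)) := by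
    have := hext.trans hsum
    nlinarith [hWle]
  -- conclude
  have hsin : 0 < Real.sin (π/16) :=
    Real.sin_pos_of_pos_of_lt_pi (by positivity) (by linarith)
  have hcos : 0 < Real.cos (π/16) := by
    apply Real.cos_pos_of_mem_Ioo
    constructor <;> [linarith; linarith]
  have h1 : 2 * polygonWidth v * Real.sin (π/16) ≤ c * Real.cos (π/16) := by
    have h2 := mul_le_mul_of_nonneg_right hkey hsin.le
    have h3 : c * (Real.cos (π/16) / Real.sin (π/16)) * Real.sin (π/16)
        = c * Real.cos (π/16) := by
      rw [mul_assoc, div_mul_cancel₀ _ hsin.ne']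
    linarith
  rw [ge_iff_le, Real.tan_eq_sin_div_cos, ← mul_div_assoc, div_le_iff₀ hcos]
  linarith
end

section
/- In any equilateral small octagon P with side length c satisfying 0.3794 ≤ c ≤ 0.3870 and width at least 0.9537, for every side v_{i-1}v_i the vertex farthest from the line through that side is v_{i+3} or v_{i+4} (indices mod 8): the distance from v_{i+1}, v_{i+2}, v_{i+5}, v_{i+6} to that line is strictly less than 0.9537. -/
open Real

/-- The (signed) distance from the point `v k` to the line through `v (i-1)` and `v i`. -/
noncomputable def heightDist (v : Fin 8 → ℝ × ℝ) (i k : Fin 8) : ℝ :=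
  cross (v k) (v (i-1)) (v i) / dist2 (v (i-1)) (v i)

lemma aux_cs (a1 a2 b1 b2 : ℝ) :
    a1 * b2 - a2 * b1 ≤ Real.sqrt (a1^2 + a2^2) * Real.sqrt (b1^2 + b2^2) := by
  have h1 := Real.sqrt_nonneg (a1^2 + a2^2)
  have h2 := Real.sqrt_nonneg (b1^2 + b2^2)
  have e1 := Real.sq_sqrt (show (0:ℝ) ≤ a1^2 + a2^2 by positivity)
  have e2 := Real.sq_sqrt (show (0:ℝ) ≤ b1^2 + b2^2 by positivity)
  nlinarith [sq_nonneg (a1*b1 + a2*b2), mul_nonneg h1 h2,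
    sq_nonneg (Real.sqrt (a1^2+a2^2) * Real.sqrt (b1^2+b2^2) - (a1*b2 - a2*b1))]

lemma aux_inner (a1 a2 b1 b2 : ℝ) :
    a1 * b1 + a2 * b2 ≤ Real.sqrt (a1^2 + a2^2) * Real.sqrt (b1^2 + b2^2) := by
  have h1 := Real.sqrt_nonneg (a1^2 + a2^2)
  have h2 := Real.sqrt_nonneg (b1^2 + b2^2)
  have e1 := Real.sq_sqrt (show (0:ℝ) ≤ a1^2 + a2^2 by positivity)
  have e2 := Real.sq_sqrt (show (0:ℝ) ≤ b1^2 + b2^2 by positivity)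
  nlinarith [sq_nonneg (a1*b2 - a2*b1), mul_nonneg h1 h2,
    sq_nonneg (Real.sqrt (a1^2+a2^2) * Real.sqrt (b1^2+b2^2) - (a1*b1 + a2*b2))]

lemma dist2_triangle (a b c : ℝ × ℝ) : dist2 a c ≤ dist2 a b + dist2 b c := by
  unfold dist2
  have h1 := Real.sqrt_nonneg ((a.1-b.1)^2 + (a.2-b.2)^2)
  have h2 := Real.sqrt_nonneg ((b.1-c.1)^2 + (b.2-c.2)^2)
  have e1 := Real.sq_sqrt (show (0:ℝ) ≤ (a.1-b.1)^2 + (a.2-b.2)^2 by positivity)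
  have e2 := Real.sq_sqrt (show (0:ℝ) ≤ (b.1-c.1)^2 + (b.2-c.2)^2 by positivity)
  have hin := aux_inner (a.1-b.1) (a.2-b.2) (b.1-c.1) (b.2-c.2)
  rw [show (a.1-c.1)^2 + (a.2-c.2)^2 =
      ((a.1-b.1)+(b.1-c.1))^2 + ((a.2-b.2)+(b.2-c.2))^2 by ring]
  rw [show Real.sqrt ((a.1-b.1)^2+(a.2-b.2)^2) + Real.sqrt ((b.1-c.1)^2+(b.2-c.2)^2)
      = Real.sqrt ((Real.sqrt ((a.1-b.1)^2+(a.2-b.2)^2) + Real.sqrt ((b.1-c.1)^2+(b.2-c.2)^2))^2)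
      from (Real.sqrt_sq (by positivity)).symm]
  apply Real.sqrt_le_sqrt
  nlinarith

lemma cross_le_right (a b c : ℝ × ℝ) : cross a b c ≤ dist2 b c * dist2 c a := by
  have h := aux_cs (b.1 - c.1) (b.2 - c.2) (c.1 - a.1) (c.2 - a.2)
  unfold cross dist2
  calc (b.1 - a.1) * (c.2 - a.2) - (b.2 - a.2) * (c.1 - a.1)
      = (b.1 - c.1) * (c.2 - a.2) - (b.2 - c.2) * (c.1 - a.1) := by ring
    _ ≤ _ := h

lemma cross_le_left (a b c : ℝ × ℝ) : cross a b c ≤ dist2 a b * dist2 b c := by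
  have h := aux_cs (b.1 - a.1) (b.2 - a.2) (c.1 - b.1) (c.2 - b.2)
  unfold cross dist2
  calc (b.1 - a.1) * (c.2 - a.2) - (b.2 - a.2) * (c.1 - a.1)
      = (b.1 - a.1) * (c.2 - b.2) - (b.2 - a.2) * (c.1 - b.1) := by ring
    _ ≤ _ := by
      rw [show (a.1-b.1)^2+(a.2-b.2)^2 = (b.1-a.1)^2+(b.2-a.2)^2 by ring,
          show (b.1-c.1)^2+(b.2-c.2)^2 = (c.1-b.1)^2+(c.2-b.2)^2 by ring]
      exact h

/-- Lemma 4: in a convex equilateral small octagon with side length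
`c ∈ [0.3794, 0.3870]` and width at least `0.9537`, the vertex farthest from the
line of a side `v_{i-1} v_i` is `v_{i+3}` or `v_{i+4}`: the distances from
`v_{i+1}, v_{i+2}, v_{i+5}, v_{i+6}` to that line are all less than `0.9537`. -/
theorem farthest_vertex_is_opposite (v : Fin 8 → ℝ × ℝ) (c : ℝ)
    (hconv : ∀ i k : Fin 8, 0 ≤ cross (v i) (v (i+1)) (v k))
    (hsmall : ∀ i j : Fin 8, dist2 (v i) (v j) ≤ 1)
    (hequi : ∀ i : Fin 8, dist2 (v i) (v (i+1)) = c)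
    (hc₁ : 0.3794 ≤ c) (hc₂ : c ≤ 0.3870)
    (hwidth : 0.9537 ≤ polygonWidth v) :
    ∀ i : Fin 8, ∀ j ∈ ({1, 2, 5, 6} : Finset (Fin 8)),
      heightDist v i (i + j) < 0.9537 := by
  intro i j hj
  have hc0 : (0:ℝ) < c := by linarith
  have hsub : i - 1 = i + 7 := by
    rw [sub_eq_add_neg, show (-1 : Fin 8) = 7 from rfl]
  have hbase : dist2 (v (i-1)) (v i) = c := by
    have h := hequi (i-1)
    rwa [sub_add_cancel] at h
  have hub_right : ∀ k, heightDist v i k ≤ dist2 (v i) (v k) := by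
    intro k
    unfold heightDist
    rw [hbase, div_le_iff₀ hc0]
    calc cross (v k) (v (i-1)) (v i)
        ≤ dist2 (v (i-1)) (v i) * dist2 (v i) (v k) := cross_le_right _ _ _
      _ = dist2 (v i) (v k) * c := by rw [hbase]; ring
  have hub_left : ∀ k, heightDist v i k ≤ dist2 (v k) (v (i-1)) := by
    intro k
    unfold heightDist
    rw [hbase, div_le_iff₀ hc0]
    calc cross (v k) (v (i-1)) (v i)
        ≤ dist2 (v k) (v (i-1)) * dist2 (v (i-1)) (v i) := cross_le_left _ _ _
      _ = dist2 (v k) (v (i-1)) * c := by rw [hbase]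
  fin_cases hj
  · -- j = 1
    have h := hub_right (i + 1)
    have h1 := hequi i
    linarith
  · -- j = 2
    have h := hub_right (i + 2)
    have tri := dist2_triangle (v i) (v (i+1)) (v (i+2))
    have h1 := hequi i
    have h2 : dist2 (v (i+1)) (v (i+2)) = c := by
      have := hequi (i+1)
      rwa [add_assoc, show (1:Fin 8)+1 = 2 from rfl] at this
    linarith
  · -- j = 5
    have h := hub_left (i + 5)
    have tri := dist2_triangle (v (i+5)) (v (i+6)) (v (i-1))
    have h1 : dist2 (v (i+5)) (v (i+6)) = c := by
      have := hequi (i+5)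
      rwa [add_assoc, show (5:Fin 8)+1 = 6 from rfl] at this
    have h2 : dist2 (v (i+6)) (v (i-1)) = c := by
      have := hequi (i+6)
      rwa [add_assoc, show (6:Fin 8)+1 = 7 from rfl, ← hsub] at this
    linarith
  · -- j = 6
    have h := hub_left (i + 6)
    have h2 : dist2 (v (i+6)) (v (i-1)) = c := by
      have := hequi (i+6)
      rwa [add_assoc, show (6:Fin 8)+1 = 7 from rfl, ← hsub] at this
    linarith
end
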